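/- arXiv:1402.3291 — 5 statements merged into one kernel-verified Lean document; each statement's English description precedes it below -/
import Mathlib

section
/- There exists a statistically quasi-Cauchy sequence of real numbers that is not statistically convergent (to any limit). For instance, the sequence xₖ = √k is statistically quasi-Cauchy but not statistically convergent. -/
open Filter

/-- A 2-normed space: a real linear space with dim > 1 together with a 2-norm. -/
structure TwoNormedSpace (X : Type*) [AddCommGroup X] [Module ℝ X] : Type _ where
  toFun : X → X → ℝ
  one_lt_rank : 1 < Module.rank ℝ X
  eq_zero_iff : ∀ x y : X, toFun x y = 0 ↔ ¬ LinearIndependent ℝ ![x, y]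
  symm : ∀ x y : X, toFun x y = toFun y x
  smul_left : ∀ (α : ℝ) (x y : X), toFun (α • x) y = |α| * toFun x y
  add_right : ∀ x y z : X, toFun x (y + z) ≤ toFun x y + toFun x z

variable {X : Type*} [AddCommGroup X] [Module ℝ X]

/-- A sequence is statistically quasi-Cauchy w.r.t. a 2-norm `N`. -/
def StatQuasiCauchy (N : X → X → ℝ) (x : ℕ → X) : Prop :=
  ∀ ε > (0:ℝ), ∀ z : X, Tendsto
    (fun n => (((Finset.range n).filter (fun k => ε ≤ N (x (k+1) - x k) z)).card : ℝ) / n)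
    atTop (nhds 0)

/-- A sequence statistically converges to `L` w.r.t. a 2-norm `N`. -/
def StatConv (N : X → X → ℝ) (x : ℕ → X) (L : X) : Prop :=
  ∀ ε > (0:ℝ), ∀ z : X, Tendsto
    (fun n => (((Finset.range n).filter (fun k => ε ≤ N (x k - L) z)).card : ℝ) / n)
    atTop (nhds 0)

/-- A sequence converges to `L` w.r.t. a 2-norm `N`. -/
def ConvTo (N : X → X → ℝ) (x : ℕ → X) (L : X) : Prop :=
  ∀ z : X, Tendsto (fun n => N (x n - L) z) atTop (nhds 0)

/-- A sequence is quasi-Cauchy w.r.t. a 2-norm `N`. -/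
def QuasiCauchy (N : X → X → ℝ) (x : ℕ → X) : Prop :=
  ∀ z : X, Tendsto (fun n => N (x (n+1) - x n) z) atTop (nhds 0)

/-- A subset `E` is statistically ward compact w.r.t. a 2-norm `N`. -/
def StatWardCompact (N : X → X → ℝ) (E : Set X) : Prop :=
  ∀ x : ℕ → X, (∀ n, x n ∈ E) → ∃ φ : ℕ → ℕ, StrictMono φ ∧ StatQuasiCauchy N (x ∘ φ)

/-- `f` is statistically ward continuous on `E` w.r.t. a 2-norm `N`. -/
def StatWardContinuousOn (N : X → X → ℝ) (f : X → X) (E : Set X) : Prop :=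
  ∀ x : ℕ → X, (∀ n, x n ∈ E) → StatQuasiCauchy N x → StatQuasiCauchy N (fun n => f (x n))

/-- The standard 2-norm on `ℝ²`: the area of the parallelogram spanned by `a` and `b`. -/
def N2 : ℝ × ℝ → ℝ × ℝ → ℝ := fun a b => |a.1 * b.2 - a.2 * b.1|

/-- A real sequence is statistically quasi-Cauchy. -/
def StatQuasiCauchyR (x : ℕ → ℝ) : Prop :=
  ∀ ε > (0:ℝ), Tendsto
    (fun n => (((Finset.range n).filter (fun k => ε ≤ |x (k+1) - x k|)).card : ℝ) / n)
    atTop (nhds 0)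

/-- A real sequence statistically converges to `L`. -/
def StatConvR (x : ℕ → ℝ) (L : ℝ) : Prop :=
  ∀ ε > (0:ℝ), Tendsto
    (fun n => (((Finset.range n).filter (fun k => ε ≤ |x k - L|)).card : ℝ) / n)
    atTop (nhds 0)

open Finset

section Density

variable {p : ℕ → Prop} [DecidablePred p]

lemma tendsto_card_filter_range_div_of_eventually_not (h : ∀ᶠ k in atTop, ¬ p k) :
    Tendsto (fun n : ℕ => (#{k ∈ range n | p k} : ℝ) / n) atTop (nhds 0) := by
  obtain ⟨K, hK⟩ := eventually_atTop.1 h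
  have hsub : ∀ n, {k ∈ range n | p k} ⊆ range K := fun n k hk => by
    rw [mem_filter] at hk
    exact mem_range.2 (lt_of_not_ge fun hKk => hK k hKk hk.2)
  refine squeeze_zero (fun n => by positivity) (fun n => ?_)
    (tendsto_const_div_atTop_nhds_zero_nat (K : ℝ))
  gcongr
  simpa using card_le_card (hsub n)

lemma tendsto_card_filter_range_div_of_eventually (h : ∀ᶠ k in atTop, p k) :
    Tendsto (fun n : ℕ => (#{k ∈ range n | p k} : ℝ) / n) atTop (nhds 1) := by
  have hnot := tendsto_card_filter_range_div_of_eventually_not (p := fun k => ¬ p k)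
    (h.mono fun _ hk => not_not_intro hk)
  have hcompl : Tendsto (fun n : ℕ => 1 - (#{k ∈ range n | ¬ p k} : ℝ) / n) atTop (nhds 1) := by
    simpa using (tendsto_const_nhds (x := (1 : ℝ))).sub hnot
  refine hcompl.congr' ?_
  filter_upwards [eventually_ne_atTop 0] with n hn
  have hcard : (#{k ∈ range n | p k} : ℝ) + #{k ∈ range n | ¬ p k} = n := by
    exact_mod_cast (card_filter_add_card_filter_not (s := range n) p).trans (card_range n)
  field_simp
  linarith

end Density

lemma statQuasiCauchyR_of_tendsto_sub {x : ℕ → ℝ}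
    (h : Tendsto (fun k => x (k + 1) - x k) atTop (nhds 0)) : StatQuasiCauchyR x := by
  intro ε hε
  apply tendsto_card_filter_range_div_of_eventually_not
  filter_upwards [(tendsto_zero_iff_abs_tendsto_zero _).1 h |>.eventually (gt_mem_nhds hε)]
    with k hk using not_le.2 hk

lemma not_statConvR_of_tendsto_atTop {x : ℕ → ℝ} (h : Tendsto x atTop atTop) (L : ℝ) :
    ¬ StatConvR x L := fun hL =>
  have hfar : ∀ᶠ k in atTop, 1 ≤ |x k - L| :=
    (h.eventually_ge_atTop (L + 1)).mono fun k hk => by linarith [le_abs_self (x k - L)]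
  one_ne_zero <| tendsto_nhds_unique
    (tendsto_card_filter_range_div_of_eventually hfar) (hL 1 one_pos)

lemma Real.sqrt_add_one_sub_sqrt {x : ℝ} (hx : 0 ≤ x) :
    √(x + 1) - √x = (√(x + 1) + √x)⁻¹ := by
  have hpos : 0 < √(x + 1) + √x := by positivity
  field_simp
  nlinarith [Real.sq_sqrt hx, Real.sq_sqrt (by linarith : 0 ≤ x + 1)]

lemma Real.tendsto_sqrt_add_one_sub_sqrt_atTop :
    Tendsto (fun x : ℝ => √(x + 1) - √x) atTop (nhds 0) := by
  have hsum : Tendsto (fun x : ℝ => √(x + 1) + √x) atTop atTop :=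
    (Real.tendsto_sqrt_atTop.comp (tendsto_atTop_add_const_right _ 1 tendsto_id)).atTop_add_atTop
      Real.tendsto_sqrt_atTop
  refine (tendsto_inv_atTop_zero.comp hsum).congr' ?_
  filter_upwards [eventually_ge_atTop 0] with x hx
  exact (Real.sqrt_add_one_sub_sqrt hx).symm

theorem stmt6 :
    StatQuasiCauchyR (fun k => Real.sqrt k) ∧
    ∀ L : ℝ, ¬ StatConvR (fun k => Real.sqrt k) L := by
  refine ⟨statQuasiCauchyR_of_tendsto_sub ?_,
    not_statConvR_of_tendsto_atTop (Real.tendsto_sqrt_atTop.comp tendsto_natCast_atTop_atTop)⟩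
  simpa [Function.comp_def] using
    Real.tendsto_sqrt_add_one_sub_sqrt_atTop.comp tendsto_natCast_atTop_atTop
end

section
/- If a function f defined on a subset E of a 2-normed space X is statistically sequentially continuous at every point of E, then f is sequentially continuous on E (i.e., f preserves convergent sequences of points of E). -/
open Filter

variable {X : Type*} [AddCommGroup X] [Module ℝ X]

lemma TwoNormedSpace.nonneg (T : TwoNormedSpace X) (x y : X) : 0 ≤ T.toFun x y := by
  have h0 : T.toFun x 0 = 0 := by
    rw [T.symm]
    have := T.smul_left 0 x x
    simpa using this
  have hneg : T.toFun x (-y) = T.toFun x y := by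
    rw [T.symm, show (-y : X) = (-1 : ℝ) • y by simp, T.smul_left]
    simp [T.symm]
  have := T.add_right x y (-y)
  simp [h0, hneg] at this
  linarith

lemma convTo_statConv (T : TwoNormedSpace X) (x : ℕ → X) (L : X)
    (hc : ConvTo T.toFun x L) : StatConv T.toFun x L := by
  intro ε hε z
  have := (hc z).eventually (eventually_lt_nhds hε)
  obtain ⟨M, hM⟩ := eventually_atTop.mp this
  have hsub : ∀ n, ((Finset.range n).filter (fun k => ε ≤ T.toFun (x k - L) z)).card ≤ M := by
    intro n
    calc ((Finset.range n).filter (fun k => ε ≤ T.toFun (x k - L) z)).card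
        ≤ (Finset.range M).card := by
          apply Finset.card_le_card
          intro k hk
          simp only [Finset.mem_filter, Finset.mem_range] at hk ⊢
          by_contra hkM
          push_neg at hkM
          exact absurd (hM k hkM) (not_lt.mpr hk.2)
      _ = M := Finset.card_range M
  have h1 : Tendsto (fun n : ℕ => (M : ℝ) / n) atTop (nhds 0) :=
    tendsto_const_nhds.div_atTop tendsto_natCast_atTop_atTop
  apply squeeze_zero (fun n => by positivity) _ h1
  intro n
  gcongr
  exact_mod_cast hsub n

theorem stmt11 {X : Type*} [AddCommGroup X] [Module ℝ X] (T : TwoNormedSpace X)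
    (E : Set X) (f : X → X)
    (h : ∀ x₀ ∈ E, ∀ x : ℕ → X, (∀ n, x n ∈ E) → StatConv T.toFun x x₀ →
      StatConv T.toFun (fun n => f (x n)) (f x₀)) :
    ∀ x₀ ∈ E, ∀ x : ℕ → X, (∀ n, x n ∈ E) → ConvTo T.toFun x x₀ →
      ConvTo T.toFun (fun n => f (x n)) (f x₀) := by
  intro x₀ hx₀ x hxE hconv
  by_contra hnot
  simp only [ConvTo, not_forall] at hnot
  obtain ⟨z, hz⟩ := hnot
  rw [Metric.tendsto_atTop] at hz
  push_neg at hz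
  obtain ⟨ε, hε, hfreq⟩ := hz
  have hfreq' : ∃ᶠ n in atTop, ε ≤ T.toFun (f (x n) - f x₀) z := by
    rw [frequently_atTop]
    intro M
    obtain ⟨n, hn, hd⟩ := hfreq M
    refine ⟨n, hn, ?_⟩
    rw [Real.dist_eq, sub_zero, abs_of_nonneg (T.nonneg _ _)] at hd
    exact hd
  obtain ⟨φ, hφ, hφε⟩ := extraction_of_frequently_atTop hfreq'
  have hconvφ : ConvTo T.toFun (x ∘ φ) x₀ := fun w =>
    (hconv w).comp hφ.tendsto_atTop
  have hstat := h x₀ hx₀ (x ∘ φ) (fun n => hxE (φ n)) (convTo_statConv T _ _ hconvφ)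
  have := hstat ε hε z
  have hone : Tendsto (fun n : ℕ =>
      (((Finset.range n).filter (fun k => ε ≤ T.toFun ((fun n => f ((x ∘ φ) n)) k - f x₀) z)).card : ℝ) / n)
      atTop (nhds 1) := by
    have heq : ∀ᶠ n in atTop, (((Finset.range n).filter
        (fun k => ε ≤ T.toFun ((fun n => f ((x ∘ φ) n)) k - f x₀) z)).card : ℝ) / n = 1 := by
      filter_upwards [eventually_ge_atTop 1] with n hn
      have : (Finset.range n).filter (fun k => ε ≤ T.toFun ((fun n => f ((x ∘ φ) n)) k - f x₀) z)
          = Finset.range n := by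
        apply Finset.filter_true_of_mem
        intro k _
        exact hφε k
      rw [this, Finset.card_range]
      have hn' : (n : ℝ) ≠ 0 := by positivity
      field_simp
    exact tendsto_const_nhds.congr' (heq.mono fun n hn => hn.symm)
  exact zero_ne_one (tendsto_nhds_unique this hone)
end

section
/- Let f : X → X be a function on a 2-normed space X. If for some fixed x₀ ∈ X it holds that for every sequence (xₙ) statistically converging to x₀ the sequence (f(xₙ)) converges to f(x₀) (in the ordinary sense), then f is constant. -/
open Filter

variable {X : Type*} [AddCommGroup X] [Module ℝ X]

/-! The sequence equal to `t` at the perfect squares and to `x₀` elsewhere statistically converges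
to `x₀`, because the squares have density zero. Hence its images converge to `f x₀`; along the
squares they are constantly `f t`, so `‖f t - f x₀, z‖ = 0` for every `z`, which forces
`f t = f x₀` in a space of dimension at least two. -/

namespace TwoNormedSpace

variable (T : TwoNormedSpace X)

theorem apply_zero_left (z : X) : T.toFun 0 z = 0 := by
  simpa using T.smul_left 0 0 z

/-- Since `dim X ≥ 2`, every `v ≠ 0` extends to a linearly independent pair `(z, v)`. -/
theorem eq_zero_of_forall_apply_eq_zero {v : X} (hv : ∀ z, T.toFun v z = 0) : v = 0 := by
  by_contra hv0
  obtain ⟨z, hz⟩ := exists_linearIndependent_cons_of_lt_rank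
    (LinearIndependent.of_subsingleton (v := ![v]) 0 hv0) (by simpa using T.one_lt_rank)
  exact (T.eq_zero_iff z v).mp (T.symm z v ▸ hv z) hz

end TwoNormedSpace

theorem statConv_of_eq_off_density_zero {E : Type*} [AddCommGroup E] {N : E → E → ℝ}
    (hN : ∀ z, N 0 z = 0) {x : ℕ → E} {L : E} {p : ℕ → Prop} [DecidablePred p]
    (hp : Tendsto (fun n => (((Finset.range n).filter p).card : ℝ) / n) atTop (nhds 0))
    (hx : ∀ k, ¬ p k → x k = L) : StatConv N x L := by
  intro ε hε z
  refine squeeze_zero (fun n => by positivity) (fun n => ?_) hp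
  have hsub : (Finset.range n).filter (fun k => ε ≤ N (x k - L) z) ⊆
      (Finset.range n).filter p := by
    refine Finset.monotone_filter_right _ fun k _ hk => ?_
    by_contra hpk
    rw [hx k hpk, sub_self, hN] at hk
    exact hε.not_ge hk
  gcongr

theorem card_filter_isSquare_range_le (n : ℕ) :
    ((Finset.range n).filter IsSquare).card ≤ Nat.sqrt n + 1 := by
  have hsub : (Finset.range n).filter IsSquare ⊆
      (Finset.range (Nat.sqrt n + 1)).image (fun m => m * m) := by
    intro k hk
    obtain ⟨hkn, m, rfl⟩ := Finset.mem_filter.mp hk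
    have hm : m ≤ Nat.sqrt n := Nat.le_sqrt.mpr (Finset.mem_range.mp hkn).le
    exact Finset.mem_image.mpr ⟨m, Finset.mem_range.mpr (Nat.lt_succ_of_le hm), rfl⟩
  simpa using (Finset.card_le_card hsub).trans Finset.card_image_le

theorem tendsto_nat_sqrt_atTop : Tendsto Nat.sqrt atTop atTop :=
  Monotone.tendsto_atTop_atTop (fun _ _ => Nat.sqrt_le_sqrt) fun m =>
    ⟨m * m, (Nat.sqrt_eq m).ge⟩

/-- `(√n + 1) / n ≤ 2 / √n`, using `(Nat.sqrt n)² ≤ n`. -/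
theorem tendsto_nat_sqrt_add_one_div :
    Tendsto (fun n : ℕ => ((Nat.sqrt n + 1 : ℕ) : ℝ) / n) atTop (nhds 0) := by
  have hlim : Tendsto (fun n : ℕ => 2 / (Nat.sqrt n : ℝ)) atTop (nhds 0) :=
    tendsto_const_nhds.div_atTop (tendsto_natCast_atTop_atTop.comp tendsto_nat_sqrt_atTop)
  refine squeeze_zero' (Eventually.of_forall fun n => by positivity) ?_ hlim
  filter_upwards [eventually_ge_atTop 1] with n hn
  have hs : (1 : ℝ) ≤ Nat.sqrt n := by exact_mod_cast Nat.sqrt_pos.mpr hn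
  have hsn : (Nat.sqrt n : ℝ) * Nat.sqrt n ≤ n := by exact_mod_cast Nat.sqrt_le n
  rw [div_le_div_iff₀ (by positivity) (by positivity)]
  push_cast
  nlinarith

theorem tendsto_card_filter_isSquare_range_div :
    Tendsto (fun n => (((Finset.range n).filter IsSquare).card : ℝ) / n) atTop (nhds 0) :=
  squeeze_zero (fun n => by positivity)
    (fun n => by gcongr; exact_mod_cast card_filter_isSquare_range_le n)
    tendsto_nat_sqrt_add_one_div

theorem stmt12 {X : Type*} [AddCommGroup X] [Module ℝ X] (T : TwoNormedSpace X)
    (f : X → X) (x₀ : X)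
    (h : ∀ x : ℕ → X, StatConv T.toFun x x₀ → ConvTo T.toFun (fun n => f (x n)) (f x₀)) :
    ∀ t : X, f t = f x₀ := by
  intro t
  let x : ℕ → X := fun k => if IsSquare k then t else x₀
  have hconv : ConvTo T.toFun (fun n => f (x n)) (f x₀) :=
    h x (statConv_of_eq_off_density_zero T.apply_zero_left
      tendsto_card_filter_isSquare_range_div fun k hk => if_neg hk)
  refine sub_eq_zero.mp (T.eq_zero_of_forall_apply_eq_zero fun z => ?_)
  have hsq : Tendsto (fun m : ℕ => m * m) atTop atTop :=
    tendsto_id.atTop_mul_atTop₀ tendsto_id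
  have hlim := (hconv z).comp hsq
  have hx_sq : ∀ m, x (m * m) = t := fun m => if_pos ⟨m, rfl⟩
  simp only [Function.comp_def, hx_sq] at hlim
  exact tendsto_nhds_unique tendsto_const_nhds hlim
end

section
/- If f : X → X is statistically ward continuous on a subset E of a 2-normed space X, then f is statistically sequentially continuous on E. -/
/-!
Interleave the sequence `x` with the constant `x₀`. The consecutive differences of
`x₀, x 0, x₀, x 1, …` are, up to sign, the terms `x m - x₀` and `x (m + 1) - x₀`, so the
interleaved sequence is statistically quasi-Cauchy exactly when `x` statistically converges
to `x₀`. Applying `f` to it gives the interleaving of `f ∘ x` with `f x₀`, which is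
statistically quasi-Cauchy by ward continuity, hence `f ∘ x` statistically converges to `f x₀`.
-/

open Filter

variable {X : Type*} [AddCommGroup X] [Module ℝ X]

open Topology

theorem TwoNormedSpace.toFun_neg_left (T : TwoNormedSpace X) (v z : X) :
    T.toFun (-v) z = T.toFun v z := by
  simpa using T.smul_left (-1) v z

def HasDensityZero (p : ℕ → Prop) [DecidablePred p] : Prop :=
  Tendsto (fun n => (Nat.count p n : ℝ) / n) atTop (𝓝 0)

theorem Nat.count_two_mul (p : ℕ → Prop) [DecidablePred p] (n : ℕ) :
    Nat.count p (2 * n) =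
      Nat.count (fun m => p (2 * m)) n + Nat.count (fun m => p (2 * m + 1)) n := by
  induction n with
  | zero => simp
  | succ n ih =>
    rw [show 2 * (n + 1) = 2 * n + 1 + 1 by ring, Nat.count_succ, Nat.count_succ, ih,
      Nat.count_succ, Nat.count_succ]
    ring

namespace HasDensityZero

variable {p q : ℕ → Prop} [DecidablePred p] [DecidablePred q]

theorem mono (hp : HasDensityZero p) (hqp : ∀ k, q k → p k) : HasDensityZero q := by
  refine squeeze_zero (fun n => by positivity) (fun n => ?_) hp
  gcongr
  exact hqp _

theorem comp_two_mul (hp : HasDensityZero p) : HasDensityZero fun m => p (2 * m) := by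
  have h2 : Tendsto (fun n : ℕ => 2 * n) atTop atTop :=
    tendsto_id.const_mul_atTop' two_pos
  refine squeeze_zero (fun n => by positivity) (fun n => ?_)
    (by simpa using (hp.comp h2).const_mul 2)
  calc (Nat.count (fun m => p (2 * m)) n : ℝ) / n ≤ Nat.count p (2 * n) / n := by
        gcongr
        rw [Nat.count_two_mul]
        exact Nat.le_add_right _ _
    _ = 2 * (Nat.count p (2 * n) / (2 * n)) := by
        rw [mul_div_assoc', mul_div_mul_left _ _ two_ne_zero]

theorem of_comp_two_mul (h₀ : HasDensityZero fun m => p (2 * m))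
    (h₁ : HasDensityZero fun m => p (2 * m + 1)) : HasDensityZero p := by
  refine squeeze_zero (fun n => by positivity) (fun n => ?_) (by simpa using h₀.add h₁)
  rw [← add_div]
  gcongr
  exact_mod_cast (Nat.count_monotone p (by omega : n ≤ 2 * n)).trans (Nat.count_two_mul p n).le

theorem comp_succ (hp : HasDensityZero p) : HasDensityZero fun k => p (k + 1) := by
  refine squeeze_zero (fun n => by positivity) (fun n => ?_)
    (by simpa using hp.add tendsto_one_div_atTop_nhds_zero_nat)
  rw [← one_div, ← add_div]
  gcongr
  have h : Nat.count (fun k => p (k + 1)) n ≤ Nat.count p n + 1 :=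
    calc _ ≤ Nat.count p (n + 1) := by rw [Nat.count_add']; exact Nat.le_add_right _ _
      _ ≤ Nat.count p n + 1 := by rw [Nat.count_succ]; split_ifs <;> omega
  exact_mod_cast h

end HasDensityZero

def interleave {α : Type*} (a b : ℕ → α) (k : ℕ) : α :=
  if Even k then a (k / 2) else b (k / 2)

section Interleave

variable {α β : Type*}

@[simp]
theorem interleave_two_mul (a b : ℕ → α) (m : ℕ) : interleave a b (2 * m) = a m := by
  simp [interleave]

@[simp]
theorem interleave_two_mul_add_one (a b : ℕ → α) (m : ℕ) :
    interleave a b (2 * m + 1) = b m := by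
  simp [interleave, Nat.mul_add_div]

theorem map_interleave (a b : ℕ → α) (g : α → β) :
    (fun k => g (interleave a b k)) = interleave (fun m => g (a m)) (fun m => g (b m)) := by
  funext k
  unfold interleave
  split_ifs <;> rfl

theorem interleave_mem {s : Set α} {a b : ℕ → α} (ha : ∀ m, a m ∈ s)
    (hb : ∀ m, b m ∈ s) (k : ℕ) : interleave a b k ∈ s := by
  unfold interleave
  split_ifs
  exacts [ha _, hb _]

end Interleave

section Statistical

variable {V : Type*} [AddCommGroup V] {N : V → V → ℝ}

theorem statQuasiCauchy_iff (x : ℕ → V) :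
    StatQuasiCauchy N x ↔
      ∀ ε > (0 : ℝ), ∀ z, HasDensityZero fun k => ε ≤ N (x (k + 1) - x k) z := by
  simp only [StatQuasiCauchy, HasDensityZero, Nat.count_eq_card_filter_range]

theorem statConv_iff (x : ℕ → V) (L : V) :
    StatConv N x L ↔ ∀ ε > (0 : ℝ), ∀ z, HasDensityZero fun k => ε ≤ N (x k - L) z := by
  simp only [StatConv, HasDensityZero, Nat.count_eq_card_filter_range]

theorem statQuasiCauchy_interleave_const_iff (hN : ∀ v z, N (-v) z = N v z) (x : ℕ → V)
    (L : V) : StatQuasiCauchy N (interleave x fun _ => L) ↔ StatConv N x L := by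
  rw [statQuasiCauchy_iff, statConv_iff]
  refine forall₂_congr fun ε _ => forall_congr' fun z => ?_
  have h_even (m : ℕ) : ε ≤ N (interleave x (fun _ => L) (2 * m + 1)
      - interleave x (fun _ => L) (2 * m)) z ↔ ε ≤ N (x m - L) z := by
    rw [interleave_two_mul, interleave_two_mul_add_one, ← neg_sub, hN]
  have h_odd (m : ℕ) : ε ≤ N (interleave x (fun _ => L) (2 * m + 1 + 1)
      - interleave x (fun _ => L) (2 * m + 1)) z ↔ ε ≤ N (x (m + 1) - L) z := by
    rw [show 2 * m + 1 + 1 = 2 * (m + 1) by ring, interleave_two_mul, interleave_two_mul_add_one]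
  constructor
  · intro hq
    exact hq.comp_two_mul.mono fun m => (h_even m).2
  · intro hp
    exact .of_comp_two_mul (hp.mono fun m => (h_even m).1)
      (hp.comp_succ.mono fun m => (h_odd m).1)

end Statistical

theorem stmt15 {X : Type*} [AddCommGroup X] [Module ℝ X] (T : TwoNormedSpace X)
    (E : Set X) (f : X → X) (hf : StatWardContinuousOn T.toFun f E) :
    ∀ x₀ ∈ E, ∀ x : ℕ → X, (∀ n, x n ∈ E) → StatConv T.toFun x x₀ →
      StatConv T.toFun (fun n => f (x n)) (f x₀) := by
  intro x₀ hx₀ x hx hconv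
  have hy := hf _ (interleave_mem hx fun _ => hx₀)
    ((statQuasiCauchy_interleave_const_iff T.toFun_neg_left x x₀).2 hconv)
  rw [map_interleave] at hy
  exact (statQuasiCauchy_interleave_const_iff T.toFun_neg_left _ _).1 hy
end

section
/- If f is statistically ward continuous on a statistically ward compact subset E of a 2-normed space X and maps X to X in a manner compatible with the 2-norm, then the image f(E) is statistically ward compact. -/
open Filter

variable {X : Type*} [AddCommGroup X] [Module ℝ X]

theorem stmt18 {X : Type*} [AddCommGroup X] [Module ℝ X] (T : TwoNormedSpace X)
    (E : Set X) (f : X → X) (hE : StatWardCompact T.toFun E)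
    (hf : StatWardContinuousOn T.toFun f E) :
    StatWardCompact T.toFun (f '' E) := by
  intro y hy
  choose x hxE hfx using hy
  obtain ⟨φ, hφ, hqc⟩ := hE x hxE
  refine ⟨φ, hφ, ?_⟩
  have := hf (x ∘ φ) (fun n => hxE (φ n)) hqc
  have heq : (fun n => f ((x ∘ φ) n)) = y ∘ φ := funext fun n => hfx (φ n)
  rwa [heq] at this
end
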